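/- arXiv:2104.11285 — 5 statements merged into one kernel-verified Lean document; each statement's English description precedes it below -/
import Mathlib

section
/- Let σ_1,...,σ_m > 0, μ_1,...,μ_m ∈ ℝ^n, and t > 0. Then for every x ∈ ℝ^n, min_{u ∈ ℝ^n} min_{i∈{1,...,m}} { (1/(2σ_i²))‖u − μ_i‖² + (1/(2t))‖x − u‖² } = min_{i∈{1,...,m}} (1/(2(σ_i² + t)))‖x − μ_i‖². -/
/-!
For a single quadratic the inner minimization is explicit: by the triangle inequality and
Sedrakyan's inequality `(p + q)² / (s + t) ≤ p² / s + q² / t`, the value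
`‖u - μ‖² / (2s) + ‖x - u‖² / (2t)` is at least `‖x - μ‖² / (2(s + t))`, with equality at the
convex combination `u = (t μ + s x) / (s + t)`. Since every quadratic attains its minimum, the
minimum over `u` commutes with the finite minimum over the mixture components.
-/

open Set

lemma sq_add_div_add_le {p q s t : ℝ} (hs : 0 < s) (ht : 0 < t) :
    (p + q) ^ 2 / (s + t) ≤ p ^ 2 / s + q ^ 2 / t := by
  rw [div_add_div _ _ hs.ne' ht.ne', div_le_div_iff₀ (by positivity) (by positivity)]
  nlinarith [sq_nonneg (p * t - q * s)]

section ProximalValue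

variable {E : Type*} [SeminormedAddCommGroup E]

lemma sq_dist_div_add_le (x μ u : E) {s t : ℝ} (hs : 0 < s) (ht : 0 < t) :
    1 / (2 * (s + t)) * ‖x - μ‖ ^ 2 ≤ 1 / (2 * s) * ‖u - μ‖ ^ 2 + 1 / (2 * t) * ‖x - u‖ ^ 2 := by
  have htriangle : ‖x - μ‖ ^ 2 ≤ (‖u - μ‖ + ‖x - u‖) ^ 2 := by
    gcongr
    rw [add_comm]
    exact norm_sub_le_norm_sub_add_norm_sub x u μ
  calc 1 / (2 * (s + t)) * ‖x - μ‖ ^ 2 = ‖x - μ‖ ^ 2 / (s + t) / 2 := by field_simp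
    _ ≤ (‖u - μ‖ + ‖x - u‖) ^ 2 / (s + t) / 2 := by gcongr
    _ ≤ (‖u - μ‖ ^ 2 / s + ‖x - u‖ ^ 2 / t) / 2 := by gcongr; exact sq_add_div_add_le hs ht
    _ = 1 / (2 * s) * ‖u - μ‖ ^ 2 + 1 / (2 * t) * ‖x - u‖ ^ 2 := by ring

variable [NormedSpace ℝ E]

lemma sq_dist_div_add_eq_of_convex_comb (x μ : E) {s t : ℝ} (hs : 0 < s) (ht : 0 < t) :
    let u := (s + t)⁻¹ • (t • μ + s • x)
    1 / (2 * s) * ‖u - μ‖ ^ 2 + 1 / (2 * t) * ‖x - u‖ ^ 2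
      = 1 / (2 * (s + t)) * ‖x - μ‖ ^ 2 := by
  intro u
  have hu_sub : u - μ = (s / (s + t)) • (x - μ) := by
    simp only [u]
    match_scalars
    · field_simp; ring
    · field_simp
  have hsub_u : x - u = (t / (s + t)) • (x - μ) := by
    simp only [u]
    match_scalars
    · field_simp; ring
    · field_simp
  rw [hu_sub, hsub_u, norm_smul, norm_smul, Real.norm_of_nonneg (by positivity),
    Real.norm_of_nonneg (by positivity)]
  field_simp

theorem isLeast_sq_dist_div_add (x μ : E) {s t : ℝ} (hs : 0 < s) (ht : 0 < t) :
    IsLeast (range fun u => 1 / (2 * s) * ‖u - μ‖ ^ 2 + 1 / (2 * t) * ‖x - u‖ ^ 2)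
      (1 / (2 * (s + t)) * ‖x - μ‖ ^ 2) :=
  ⟨⟨_, sq_dist_div_add_eq_of_convex_comb x μ hs ht⟩,
    by rintro _ ⟨u, rfl⟩; exact sq_dist_div_add_le x μ u hs ht⟩

end ProximalValue

theorem ciInf_finset_inf'_eq_of_isLeast {α ι β : Type*} [ConditionallyCompleteLinearOrder β]
    {s : Finset ι} (hs : s.Nonempty) {f : ι → α → β} {c : ι → β}
    (h : ∀ i ∈ s, IsLeast (range (f i)) (c i)) :
    ⨅ u, s.inf' hs (fun i => f i u) = s.inf' hs c := by
  refine IsLeast.csInf_eq ⟨?_, ?_⟩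
  · obtain ⟨i, hi, hci⟩ := s.exists_mem_eq_inf' hs c
    obtain ⟨u, hu⟩ := (h i hi).1
    refine ⟨u, le_antisymm ?_ ?_⟩
    · exact (s.inf'_le _ hi).trans (hu.trans hci.symm).le
    · exact Finset.le_inf' _ _ fun j hj => (s.inf'_le c hj).trans ((h j hj).2 ⟨u, rfl⟩)
  · rintro _ ⟨u, rfl⟩
    exact Finset.inf'_mono_fun fun j hj => (h j hj).2 ⟨u, rfl⟩

/-- The value function of the regularized minimization problem with a minimum-of-quadratics
regularizer: `min_u min_i {(1/(2σ_i²))‖u-μ_i‖² + (1/(2t))‖x-u‖²}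
  = min_i (1/(2(σ_i²+t)))‖x-μ_i‖²`. -/
theorem stmt4 (n m : ℕ) (hm : 0 < m) (σ : Fin m → ℝ) (hσ : ∀ i, 0 < σ i)
    (μ : Fin m → EuclideanSpace ℝ (Fin n)) (t : ℝ) (ht : 0 < t)
    (x : EuclideanSpace ℝ (Fin n)) :
    (⨅ u : EuclideanSpace ℝ (Fin n),
        Finset.univ.inf' (Finset.univ_nonempty_iff.2 ⟨⟨0, hm⟩⟩)
          (fun i => (1 / (2 * (σ i) ^ 2)) * ‖u - μ i‖ ^ 2 + (1 / (2 * t)) * ‖x - u‖ ^ 2))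
      = Finset.univ.inf' (Finset.univ_nonempty_iff.2 ⟨⟨0, hm⟩⟩)
          (fun i => (1 / (2 * ((σ i) ^ 2 + t))) * ‖x - μ i‖ ^ 2) :=
  ciInf_finset_inf'_eq_of_isLeast _ fun i _ =>
    isLeast_sq_dist_div_add x (μ i) (pow_pos (hσ i) 2) ht
end

section
/- Let J ∈ Γ_0(ℝ^n) and define S(x,t) = min_{u∈ℝ^n}{J(u) + (1/(2t))‖x−u‖²} for x ∈ ℝ^n, t > 0. Then S is a classical solution of the Hamilton–Jacobi equation ∂S/∂t(x,t) + ½‖∇_x S(x,t)‖² = 0 for all x ∈ ℝ^n, t > 0. -/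
/-!
For `t > 0` the function `u ↦ J u + ‖x - u‖² / (2t)` is lower semicontinuous and coercive, so it
attains its infimum at a proximal point `p = P x t`; being `1/t`-strongly convex, it grows
quadratically away from `p`: `S x t + ‖u - p‖² / (2t) ≤ J u + ‖x - u‖² / (2t)`.
Everything else follows by testing this three-point inequality on proximal points of other pairs
`(y, s)`. For `y` near `x` it pins `S y t - S x t` between `⟪(x - p)/t, y - x⟫` and that plus
`‖y - x‖²/(2t)`, so `∇ₓS = (x - p)/t`. For `s` near `t` it pins `S x s - S x t` between
`‖x - P x s‖²` and `‖x - p‖²` times `1/(2s) - 1/(2t)`, and it makes `s ↦ P x s` continuous;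
hence `∂ₜS = -‖x - p‖²/(2t²) = -½‖∇ₓS‖²`.
-/

open Filter Topology Asymptotics Set

section Calculus

variable {F : Type*} [NormedAddCommGroup F] [InnerProductSpace ℝ F] [CompleteSpace F]

theorem hasGradientAt_of_abs_sub_inner_le_mul_sq {f : F → ℝ} {g x : F} {C : ℝ}
    (h : ∀ y, |f y - f x - inner ℝ g (y - x)| ≤ C * ‖y - x‖ ^ 2) : HasGradientAt f g x := by
  rw [hasGradientAt_iff_isLittleO]
  have hsq : (fun y => ‖y - x‖ ^ 2) =o[𝓝 x] fun y => y - x :=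
    (isLittleO_norm_pow_id one_lt_two).comp_tendsto (tendsto_sub_nhds_zero_iff.2 tendsto_id)
  refine IsBigO.trans_isLittleO (IsBigO.of_bound C (Eventually.of_forall fun y => ?_)) hsq
  simpa using h y

theorem hasDerivAt_of_mul_sub_le_of_le_mul_sub {f g c : ℝ → ℝ} {g' t : ℝ}
    (hg : HasDerivAt g g' t) (hc : ContinuousAt c t)
    (hlow : ∀ᶠ s in 𝓝 t, c s * (g s - g t) ≤ f s - f t)
    (hup : ∀ᶠ s in 𝓝 t, f s - f t ≤ c t * (g s - g t)) :
    HasDerivAt f (c t * g') t := by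
  have hprod : (fun s => (c s - c t) * (g s - g t)) =o[𝓝 t] fun s => s - t := by
    have hc0 : (fun s => c s - c t) =o[𝓝 t] fun _ => (1 : ℝ) :=
      (isLittleO_one_iff ℝ).2 (tendsto_sub_nhds_zero_iff.2 hc)
    simpa using hc0.mul_isBigO hg.isBigO_sub
  have hrem : HasDerivAt (fun s => f s - c t * g s) 0 t := by
    rw [hasDerivAt_iff_isLittleO]
    refine IsBigO.trans_isLittleO (IsBigO.of_bound 1 ?_) hprod
    filter_upwards [hlow, hup] with s hl hu
    rw [smul_zero, sub_zero, one_mul, Real.norm_eq_abs, Real.norm_eq_abs, abs_le]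
    exact ⟨by linear_combination hl + neg_abs_le ((c s - c t) * (g s - g t)),
      by linear_combination hu + abs_nonneg ((c s - c t) * (g s - g t))⟩
  have h := hrem.add (hg.const_mul (c t))
  rw [zero_add] at h
  exact h.congr_of_eventuallyEq (Eventually.of_forall fun s => by simp)

end Calculus

section StrongConvexity

variable {F : Type*} [NormedAddCommGroup F] [InnerProductSpace ℝ F]

theorem strongConvexOn_norm_sub_sq_div {s : Set F} (hs : Convex ℝ s) (x : F) {t : ℝ}
    (ht : 0 < t) : StrongConvexOn s t⁻¹ fun u => ‖x - u‖ ^ 2 / (2 * t) := by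
  rw [strongConvexOn_iff_convex]
  have hlin : ConvexOn ℝ s fun u => ‖x‖ ^ 2 / (2 * t) + ((-t⁻¹) • innerₛₗ ℝ x) u :=
    (convexOn_const _ hs).add (LinearMap.convexOn _ hs)
  refine hlin.congr fun u _ => ?_
  simp only [LinearMap.smul_apply, innerₛₗ_apply_apply, smul_eq_mul]
  rw [norm_sub_sq_real]
  field_simp
  ring

theorem StrongConvexOn.add_sq_le_of_isMinOn {s : Set F} {m : ℝ} {f : F → ℝ} {p u : F}
    (hf : StrongConvexOn s m f) (hmin : IsMinOn f s p) (hp : p ∈ s) (hu : u ∈ s) :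
    f p + m / 2 * ‖u - p‖ ^ 2 ≤ f u := by
  have hseg : ∀ a ∈ Ioo (0 : ℝ) 1, f p + (1 - a) * (m / 2 * ‖u - p‖ ^ 2) ≤ f u := by
    rintro a ⟨ha0, ha1⟩
    have hmem := hf.1 hu hp ha0.le (sub_nonneg.2 ha1.le) (add_sub_cancel a 1)
    have hconv := hf.2 hu hp ha0.le (sub_nonneg.2 ha1.le) (add_sub_cancel a 1)
    have hle := isMinOn_iff.1 hmin _ hmem
    simp only [smul_eq_mul] at hconv
    refine le_of_mul_le_mul_left ?_ ha0
    linear_combination hle + hconv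
  have hlim : Tendsto (fun a : ℝ => f p + (1 - a) * (m / 2 * ‖u - p‖ ^ 2)) (𝓝[>] 0)
      (𝓝 (f p + m / 2 * ‖u - p‖ ^ 2)) :=
    ((by fun_prop : Continuous fun a : ℝ => f p + (1 - a) * (m / 2 * ‖u - p‖ ^ 2)).tendsto' 0 _
      (by ring)).mono_left nhdsWithin_le_nhds
  exact le_of_tendsto hlim (by filter_upwards [Ioo_mem_nhdsGT one_pos] with a ha using hseg a ha)

end StrongConvexity

theorem convexOn_toReal_of_le_mul_add_mul {F : Type*} [AddCommGroup F] [Module ℝ F]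
    {J : F → EReal} (hJ : ∀ u, J u ≠ ⊥)
    (hconv : ∀ u v : F, ∀ a b : ℝ, 0 ≤ a → 0 ≤ b → a + b = 1 →
      J (a • u + b • v) ≤ (a : EReal) * J u + (b : EReal) * J v) :
    ConvexOn ℝ {u | J u ≠ ⊤} fun u => (J u).toReal := by
  have hseg : ∀ u, J u ≠ ⊤ → ∀ v, J v ≠ ⊤ → ∀ a b : ℝ, 0 ≤ a → 0 ≤ b → a + b = 1 →
      J (a • u + b • v) ≤ ((a * (J u).toReal + b * (J v).toReal : ℝ) : EReal) := by
    intro u hu v hv a b ha hb hab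
    have := hconv u v a b ha hb hab
    rwa [← EReal.coe_toReal hu (hJ u), ← EReal.coe_toReal hv (hJ v), ← EReal.coe_mul,
      ← EReal.coe_mul, ← EReal.coe_add] at this
  have hdom : Convex ℝ {u | J u ≠ ⊤} := fun u hu v hv a b ha hb hab =>
    ne_top_of_le_ne_top (EReal.coe_ne_top _) (hseg u hu v hv a b ha hb hab)
  refine ⟨hdom, fun u hu v hv a b ha hb hab => ?_⟩
  have := hseg u hu v hv a b ha hb hab
  rw [← EReal.coe_toReal (hdom hu hv ha hb hab) (hJ _)] at this
  exact_mod_cast this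

section ThreePoint

variable {E : Type*} [NormedAddCommGroup E] {S : E → ℝ → ℝ} {P : E → ℝ → E}

/-- Since `J (P y s) = S y s - ‖y - P y s‖² / (2s)` for a proximal point `P y s`, this is the
three-point inequality `S x t + ‖u - P x t‖² / (2t) ≤ J u + ‖x - u‖² / (2t)` at `u = P y s`,
with `J` eliminated. -/
def ThreePointInequality (S : E → ℝ → ℝ) (P : E → ℝ → E) : Prop :=
  ∀ ⦃x y : E⦄ ⦃t s : ℝ⦄, 0 < t → 0 < s →
    S x t + ‖P y s - P x t‖ ^ 2 / (2 * t)
      ≤ S y s - ‖y - P y s‖ ^ 2 / (2 * s) + ‖x - P y s‖ ^ 2 / (2 * t)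

namespace ThreePointInequality

theorem le (hP : ThreePointInequality S P) {x y : E} {t s : ℝ} (ht : 0 < t) (hs : 0 < s) :
    S x t ≤ S y s - ‖y - P y s‖ ^ 2 / (2 * s) + ‖x - P y s‖ ^ 2 / (2 * t) := by
  have := hP (x := x) (y := y) ht hs
  have : 0 ≤ ‖P y s - P x t‖ ^ 2 / (2 * t) := by positivity
  linarith

theorem monotoneOn (hP : ThreePointInequality S P) (x : E) :
    MonotoneOn (fun s => ‖x - P x s‖ ^ 2) (Ioi 0) := by
  intro s hs s' hs' hss'
  rcases hss'.eq_or_lt with rfl | hlt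
  · rfl
  have h₁ := hP.le (x := x) (y := x) hs hs'
  have h₂ := hP.le (x := x) (y := x) hs' hs
  have hgap : 0 < 1 / (2 * s) - 1 / (2 * s') := by
    rw [sub_pos]; gcongr; exact mul_pos two_pos hs
  have : 0 ≤ (‖x - P x s'‖ ^ 2 - ‖x - P x s‖ ^ 2) * (1 / (2 * s) - 1 / (2 * s')) := by
    simp only [div_eq_mul_inv, one_mul] at h₁ h₂ ⊢
    linear_combination h₁ + h₂
  exact sub_nonneg.1 ((mul_nonneg_iff_of_pos_right hgap).1 this)

theorem continuousAt (hP : ThreePointInequality S P) (x : E) {t : ℝ} (ht : 0 < t) :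
    ContinuousAt (P x) t := by
  set Q := fun s => ‖x - P x s‖ ^ 2
  have hbound : ∀ᶠ s in 𝓝 t,
      ‖P x s - P x t‖ ^ 2 ≤ 2 * t * Q (2 * t) * |1 / (2 * t) - 1 / (2 * s)| := by
    filter_upwards [Ioo_mem_nhds ht (by linarith : t < 2 * t)] with s hs
    have hs0 : 0 < s := hs.1
    have h₁ := hP (x := x) (y := x) ht hs0
    have h₂ := hP (x := x) (y := x) hs0 ht
    have hsum : ‖P x s - P x t‖ ^ 2 / (2 * t) ≤ (Q s - Q t) * (1 / (2 * t) - 1 / (2 * s)) := by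
      have : 0 ≤ ‖P x t - P x s‖ ^ 2 / (2 * s) := by positivity
      simp only [Q, div_eq_mul_inv, one_mul] at h₁ h₂ this ⊢
      linarith
    have hQ : |Q s - Q t| ≤ Q (2 * t) :=
      abs_sub_le_of_nonneg_of_le (sq_nonneg _) (hP.monotoneOn x hs0 (by simp; linarith) hs.2.le)
        (sq_nonneg _) (hP.monotoneOn x ht (by simp; linarith) (by linarith))
    calc ‖P x s - P x t‖ ^ 2 = 2 * t * (‖P x s - P x t‖ ^ 2 / (2 * t)) := by field_simp
      _ ≤ 2 * t * (|Q s - Q t| * |1 / (2 * t) - 1 / (2 * s)|) := by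
        gcongr
        exact hsum.trans ((le_abs_self _).trans_eq (abs_mul _ _))
      _ ≤ 2 * t * (Q (2 * t) * |1 / (2 * t) - 1 / (2 * s)|) := by gcongr
      _ = 2 * t * Q (2 * t) * |1 / (2 * t) - 1 / (2 * s)| := by ring
  have hlim : Tendsto (fun s => 2 * t * Q (2 * t) * |1 / (2 * t) - 1 / (2 * s)|) (𝓝 t) (𝓝 0) := by
    have : ContinuousAt (fun s => 2 * t * Q (2 * t) * |1 / (2 * t) - 1 / (2 * s)|) t := by
      fun_prop (disch := positivity)
    simpa using this.tendsto
  have hsq := squeeze_zero' (Eventually.of_forall fun s => sq_nonneg _) hbound hlim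
  rw [ContinuousAt, tendsto_iff_norm_sub_tendsto_zero]
  simpa [Real.sqrt_sq (norm_nonneg _)] using hsq.sqrt

theorem hasDerivAt (hP : ThreePointInequality S P) (x : E) {t : ℝ} (ht : 0 < t) :
    HasDerivAt (fun s => S x s) (‖x - P x t‖ ^ 2 * (-(t ^ 2)⁻¹ / 2)) t := by
  have hQ : ContinuousAt (fun s => ‖x - P x s‖ ^ 2) t := by
    have := hP.continuousAt x ht
    fun_prop
  refine hasDerivAt_of_mul_sub_le_of_le_mul_sub ((hasDerivAt_inv ht.ne').div_const 2) hQ ?_ ?_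
  · filter_upwards [lt_mem_nhds ht] with s hs
    have := hP.le (x := x) (y := x) ht hs
    simp only [div_eq_mul_inv] at this ⊢
    linear_combination this
  · filter_upwards [lt_mem_nhds ht] with s hs
    have := hP.le (x := x) (y := x) hs ht
    simp only [div_eq_mul_inv] at this ⊢
    linear_combination this

variable [InnerProductSpace ℝ E]

theorem hasGradientAt [CompleteSpace E] (hP : ThreePointInequality S P) (x : E) {t : ℝ}
    (ht : 0 < t) : HasGradientAt (fun y => S y t) (t⁻¹ • (x - P x t)) x := by
  refine hasGradientAt_of_abs_sub_inner_le_mul_sq (C := (2 * t)⁻¹) fun y => ?_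
  have hup := hP.le (x := y) (y := x) ht ht
  have hlow := hP (x := x) (y := y) ht ht
  set p := P x t
  set q := P y t
  set c := (2 * t)⁻¹
  have e1 := norm_add_sq_real (y - x) (x - p)
  have e2 := norm_add_sq_real (y - x) (x - q)
  have e3 := norm_add_sq_real (y - x) (p - q)
  have e4 : inner ℝ (y - x) (p - q) = inner ℝ (y - x) (x - q) - inner ℝ (y - x) (x - p) := by
    rw [← inner_sub_right, sub_sub_sub_cancel_left]
  rw [show y - x + (x - p) = y - p by abel] at e1
  rw [show y - x + (x - q) = y - q by abel] at e2
  rw [norm_sub_rev q p] at hlow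
  simp only [div_eq_mul_inv] at hup hlow
  have upper : S y t - S x t - 2 * c * inner ℝ (y - x) (x - p) ≤ c * ‖y - x‖ ^ 2 := by
    linear_combination hup + c * e1
  have lower : c * ‖y - x + (p - q)‖ ^ 2 ≤ S y t - S x t - 2 * c * inner ℝ (y - x) (x - p) := by
    linear_combination hlow - c * e2 + c * e3 + 2 * c * e4
  have hc : 0 < c := by positivity
  rw [real_inner_smul_left, real_inner_comm, show t⁻¹ = 2 * c by simp only [c]; ring, abs_le]
  refine ⟨?_, upper⟩
  linarith [mul_nonneg hc.le (sq_nonneg ‖y - x‖), mul_nonneg hc.le (sq_nonneg ‖y - x + (p - q)‖)]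

end ThreePointInequality

end ThreePoint

section MoreauEnvelope

variable {E : Type*} [NormedAddCommGroup E] {J : E → EReal} {S : E → ℝ → ℝ} {u : E} {t : ℝ}

def IsMoreauEnvelope (J : E → EReal) (S : E → ℝ → ℝ) : Prop :=
  ∀ x : E, ∀ t : ℝ, 0 < t →
    ((S x t : ℝ) : EReal) = ⨅ u : E, (J u + (((1 / (2 * t)) * ‖x - u‖ ^ 2 : ℝ) : EReal))

namespace IsMoreauEnvelope

variable (hS : IsMoreauEnvelope J S)
include hS

theorem coe_eq_iInf (ht : 0 < t) (x : E) :
    (S x t : EReal) = ⨅ u, J u + ((‖x - u‖ ^ 2 / (2 * t) : ℝ) : EReal) := by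
  simp_rw [hS x t ht, one_div_mul_eq_div]

theorem coe_le_add (ht : 0 < t) (x u : E) :
    (S x t : EReal) ≤ J u + ((‖x - u‖ ^ 2 / (2 * t) : ℝ) : EReal) :=
  (hS.coe_eq_iInf ht x).trans_le (iInf_le _ u)

theorem le_toReal_add (ht : 0 < t) (x : E) (hJ : J u ≠ ⊥) (hu : J u ≠ ⊤) :
    S x t ≤ (J u).toReal + ‖x - u‖ ^ 2 / (2 * t) := by
  have := hS.coe_le_add ht x u
  rwa [← EReal.coe_toReal hu hJ, ← EReal.coe_add, EReal.coe_le_coe_iff] at this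

theorem coe_add_sq_div_le (ht : 0 < t) (x u : E) :
    ((S x (2 * t) + ‖x - u‖ ^ 2 / (4 * t) : ℝ) : EReal)
      ≤ J u + ((‖x - u‖ ^ 2 / (2 * t) : ℝ) : EReal) := by
  have hsplit : ‖x - u‖ ^ 2 / (2 * t) = ‖x - u‖ ^ 2 / (2 * (2 * t)) + ‖x - u‖ ^ 2 / (4 * t) := by
    field_simp; ring
  rw [hsplit, EReal.coe_add, EReal.coe_add, ← add_assoc]
  gcongr
  exact hS.coe_le_add (by positivity) x u

theorem exists_eq_toReal_add [ProperSpace E] (hlsc : LowerSemicontinuous J)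
    (hJ : ∀ u, J u ≠ ⊥) (x : E) (ht : 0 < t) :
    ∃ p, J p ≠ ⊤ ∧ S x t = (J p).toReal + ‖x - p‖ ^ 2 / (2 * t) := by
  set f : E → EReal := fun u => J u + ((‖x - u‖ ^ 2 / (2 * t) : ℝ) : EReal)
  have hf : LowerSemicontinuous f :=
    hlsc.add' (continuous_coe_real_ereal.comp (by fun_prop)).lowerSemicontinuous fun u =>
      EReal.continuousAt_add (Or.inr (EReal.coe_ne_bot _)) (Or.inl (hJ u))
  set K := f ⁻¹' Iic ((S x t + 1 : ℝ) : EReal)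
  have hKne : K.Nonempty := by
    have : ⨅ u, f u < ((S x t + 1 : ℝ) : EReal) := by
      rw [← hS.coe_eq_iInf ht x]
      exact EReal.coe_lt_coe_iff.2 (lt_add_one _)
    obtain ⟨u, hu⟩ := iInf_lt_iff.1 this
    exact ⟨u, hu.le⟩
  have hKball : K ⊆ Metric.closedBall x √(4 * t * (S x t + 1 - S x (2 * t))) := by
    intro u hu
    have hreal : S x (2 * t) + ‖x - u‖ ^ 2 / (4 * t) ≤ S x t + 1 :=
      EReal.coe_le_coe_iff.1 ((hS.coe_add_sq_div_le ht x u).trans hu)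
    rw [Metric.mem_closedBall, dist_comm, dist_eq_norm]
    refine Real.le_sqrt_of_sq_le ?_
    have := (div_le_iff₀ (by positivity)).1
      (by linarith : ‖x - u‖ ^ 2 / (4 * t) ≤ S x t + 1 - S x (2 * t))
    linarith
  obtain ⟨p, hpK, hpmin⟩ := LowerSemicontinuousOn.exists_isMinOn hKne
    (Metric.isCompact_of_isClosed_isBounded (hf.isClosed_preimage _)
      (Metric.isBounded_closedBall.subset hKball)) (hf.lowerSemicontinuousOn K)
  have hfp : f p = S x t := by
    refine le_antisymm ?_ (hS.coe_le_add ht x p)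
    rw [hS.coe_eq_iInf ht x]
    refine le_iInf fun u => ?_
    by_cases hu : u ∈ K
    · exact hpmin hu
    · exact hpK.trans (not_le.1 hu).le
  have hJp : J p ≠ ⊤ := by
    intro h
    simp [f, h] at hfp
  refine ⟨p, hJp, ?_⟩
  change J p + _ = _ at hfp
  rw [← EReal.coe_toReal hJp (hJ p), ← EReal.coe_add] at hfp
  exact_mod_cast hfp.symm

theorem add_sq_le [InnerProductSpace ℝ E] (hJ : ∀ u, J u ≠ ⊥)
    (hconv : ∀ u v : E, ∀ a b : ℝ, 0 ≤ a → 0 ≤ b → a + b = 1 →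
      J (a • u + b • v) ≤ (a : EReal) * J u + (b : EReal) * J v)
    {x p : E} (ht : 0 < t) (hJp : J p ≠ ⊤) (hp : S x t = (J p).toReal + ‖x - p‖ ^ 2 / (2 * t))
    (hu : J u ≠ ⊤) :
    S x t + ‖u - p‖ ^ 2 / (2 * t) ≤ (J u).toReal + ‖x - u‖ ^ 2 / (2 * t) := by
  have hj := convexOn_toReal_of_le_mul_add_mul hJ hconv
  have hstrong : StrongConvexOn {u | J u ≠ ⊤} t⁻¹
      fun u => (J u).toReal + ‖x - u‖ ^ 2 / (2 * t) := by
    have := hj.uniformConvexOn_zero.add (strongConvexOn_norm_sub_sq_div hj.1 x ht)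
    rwa [zero_add] at this
  have hmin : IsMinOn (fun u => (J u).toReal + ‖x - u‖ ^ 2 / (2 * t)) {u | J u ≠ ⊤} p :=
    isMinOn_iff.2 fun u hu => hp ▸ hS.le_toReal_add ht x (hJ u) hu
  have := hstrong.add_sq_le_of_isMinOn hmin hJp hu
  rw [← hp] at this
  convert this using 2
  field_simp

theorem exists_threePointInequality [InnerProductSpace ℝ E] [ProperSpace E]
    (hconv : ∀ u v : E, ∀ a b : ℝ, 0 ≤ a → 0 ≤ b → a + b = 1 →
      J (a • u + b • v) ≤ (a : EReal) * J u + (b : EReal) * J v)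
    (hlsc : LowerSemicontinuous J) (hJ : ∀ u, J u ≠ ⊥) :
    ∃ P : E → ℝ → E, ThreePointInequality S P := by
  have hprox : ∀ x t, ∃ p, 0 < t → J p ≠ ⊤ ∧ S x t = (J p).toReal + ‖x - p‖ ^ 2 / (2 * t) := by
    intro x t
    by_cases ht : 0 < t
    · obtain ⟨p, hp⟩ := hS.exists_eq_toReal_add hlsc hJ x ht
      exact ⟨p, fun _ => hp⟩
    · exact ⟨x, fun h => absurd h ht⟩
  choose P hP using hprox
  refine ⟨P, fun x y t s ht hs => ?_⟩
  obtain ⟨hJp, hp⟩ := hP x t ht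
  obtain ⟨hJq, hq⟩ := hP y s hs
  have := hS.add_sq_le hJ hconv ht hJp hp hJq
  linarith

end IsMoreauEnvelope

end MoreauEnvelope

theorem stmt6_general (n : ℕ) (J : EuclideanSpace ℝ (Fin n) → EReal)
    (hconv : ∀ u v : EuclideanSpace ℝ (Fin n), ∀ a b : ℝ, 0 ≤ a → 0 ≤ b → a + b = 1 →
      J (a • u + b • v) ≤ (a : EReal) * J u + (b : EReal) * J v)
    (hlsc : LowerSemicontinuous J)
    (hnobot : ∀ u, J u ≠ ⊥)
    (S : EuclideanSpace ℝ (Fin n) → ℝ → ℝ)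
    (hS : ∀ x : EuclideanSpace ℝ (Fin n), ∀ t : ℝ, 0 < t →
      ((S x t : ℝ) : EReal)
        = ⨅ u : EuclideanSpace ℝ (Fin n),
            (J u + (((1 / (2 * t)) * ‖x - u‖ ^ 2 : ℝ) : EReal))) :
    ∀ x : EuclideanSpace ℝ (Fin n), ∀ t : ℝ, 0 < t →
      DifferentiableAt ℝ (fun y => S y t) x ∧
      HasDerivAt (fun s => S x s)
        (-((1 : ℝ) / 2 * ‖gradient (fun y => S y t) x‖ ^ 2)) t := by
  intro x t ht
  obtain ⟨P, hP⟩ := IsMoreauEnvelope.exists_threePointInequality hS hconv hlsc hnobot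
  have hgrad := hP.hasGradientAt x ht
  refine ⟨hgrad.differentiableAt, ?_⟩
  convert hP.hasDerivAt x ht using 1
  rw [hgrad.gradient, norm_smul, norm_inv, Real.norm_of_nonneg ht.le]
  ring

/-- The Moreau envelope `S(x,t) = min_u {J(u) + (1/(2t))‖x-u‖²}` of a proper convex
lower semicontinuous `J` is a classical solution of the Hamilton–Jacobi equation
`∂S/∂t + ½‖∇ₓS‖² = 0` on `ℝⁿ × (0,∞)`. -/
theorem stmt6 (n : ℕ) (J : EuclideanSpace ℝ (Fin n) → EReal)
    (hconv : ∀ u v : EuclideanSpace ℝ (Fin n), ∀ a b : ℝ, 0 ≤ a → 0 ≤ b → a + b = 1 →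
      J (a • u + b • v) ≤ (a : EReal) * J u + (b : EReal) * J v)
    (hlsc : LowerSemicontinuous J)
    (hproper : ∃ u, J u ≠ ⊤)
    (hnobot : ∀ u, J u ≠ ⊥)
    (S : EuclideanSpace ℝ (Fin n) → ℝ → ℝ)
    (hS : ∀ x : EuclideanSpace ℝ (Fin n), ∀ t : ℝ, 0 < t →
      ((S x t : ℝ) : EReal)
        = ⨅ u : EuclideanSpace ℝ (Fin n),
            (J u + (((1 / (2 * t)) * ‖x - u‖ ^ 2 : ℝ) : EReal))) :
    ∀ x : EuclideanSpace ℝ (Fin n), ∀ t : ℝ, 0 < t →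
      DifferentiableAt ℝ (fun y => S y t) x ∧
      HasDerivAt (fun s => S x s)
        (-((1 : ℝ) / 2 * ‖gradient (fun y => S y t) x‖ ^ 2)) t :=
  stmt6_general n J hconv hlsc hnobot S hS
end

section
/- Let J : ℝ^n → ℝ ∪ {+∞} be proper and bounded below and t > 0. For each ε > 0 suppose the integral Z_ε(x) = ∫_{ℝ^n} exp(−(J(u) + (1/(2t))‖x−u‖²)/ε) du is finite and positive, and define S_ε(x,t) = −ε ln( (2πtε)^{−n/2} Z_ε(x) ). Then for every fixed x and t, lim_{ε→0⁺} S_ε(x,t) = inf_{u∈ℝ^n} {J(u) + (1/(2t))‖x−u‖²}, provided J is convex, proper, lower semicontinuous with int(dom J) ≠ ∅ and inf J = 0. -/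
/-!
Put `a u = J u + ‖x - u‖² / (2t)` on `dom J` and `m = inf a`. The Gaussian prefactor only adds
`(n/2) ε log (2πtε) → 0`, so what remains is the Laplace principle
`-ε log ∫_{dom J} e^{-a/ε} → m`. Since `e^{m/ε} ∫ e^{-a/ε}` increases with `ε`, the left side is
at least `m - O(ε)`; by Markov's inequality on `{a ≤ m + δ}` it is at most `m + δ + O(ε)`, provided
this sublevel set has positive measure. Convexity supplies that: a homothety of small ratio centred
at a near-minimiser of `a` maps a bounded sublevel set of `J` of positive measure (one exists
because `dom J` has interior) into `{a ≤ m + δ}`, and scales its measure by a positive factor.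
-/

open MeasureTheory Filter Topology Real Set

lemma tendsto_mul_log_const_mul_nhds_zero (c : ℝ) :
    Tendsto (fun ε => ε * log (c * ε)) (𝓝 0) (𝓝 0) := by
  have h := ((continuous_mul_log.comp (continuous_const_mul c)).tendsto 0).const_mul c⁻¹
  simp only [Function.comp_apply, mul_zero, log_zero] at h
  refine h.congr fun ε => ?_
  rcases eq_or_ne c 0 with rfl | hc
  · simp
  · field_simp

lemma tendsto_nhdsGT_zero_of_sandwich {f : ℝ → ℝ} {m C : ℝ}
    (hlow : ∀ᶠ ε in 𝓝[>] 0, m - ε * C ≤ f ε)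
    (hup : ∀ δ > 0, ∃ c, ∀ᶠ ε in 𝓝[>] 0, f ε ≤ m + δ - ε * c) :
    Tendsto f (𝓝[>] 0) (𝓝 m) := by
  have hlin : ∀ b c : ℝ, Tendsto (fun ε => b - ε * c) (𝓝[>] 0) (𝓝 b) := fun b c =>
    ((continuous_const.sub (continuous_id.mul continuous_const)).tendsto' 0 b
      (by simp)).mono_left nhdsWithin_le_nhds
  refine tendsto_order.2 ⟨fun b hb => ?_, fun b hb => ?_⟩
  · filter_upwards [(hlin m C).eventually_const_lt hb, hlow] with ε h1 h2
    exact h1.trans_le h2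
  · obtain ⟨c, hc⟩ := hup ((b - m) / 2) (by linarith)
    filter_upwards [(hlin _ c).eventually_lt_const (by linarith : m + (b - m) / 2 < b), hc]
      with ε h1 h2
    exact h2.trans_lt h1

lemma setOf_exp_le_indicator_exp_neg_div {α : Type*} {D : Set α} {a : α → ℝ} {ε : ℝ}
    (hε : 0 < ε) (c : ℝ) :
    {u | exp (-c / ε) ≤ D.indicator (fun u => exp (-a u / ε)) u} = {u ∈ D | a u ≤ c} := by
  ext u
  by_cases hu : u ∈ D
  · simp [hu, div_le_div_iff_of_pos_right hε]
  · simp [hu, (exp_pos _).not_ge]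

section Laplace

variable {α : Type*} [MeasurableSpace α] {μ : Measure α} {D : Set α} {a : α → ℝ} {m : ℝ}

lemma exp_div_mul_integral_indicator_exp_neg_div_le_of_le (hm : ∀ u ∈ D, m ≤ a u) {ε ε' : ℝ}
    (hε : 0 < ε) (hεε' : ε ≤ ε') (hint : Integrable (D.indicator fun u => exp (-a u / ε')) μ) :
    exp (m / ε) * ∫ u, D.indicator (fun u => exp (-a u / ε)) u ∂μ
      ≤ exp (m / ε') * ∫ u, D.indicator (fun u => exp (-a u / ε')) u ∂μ := by
  rw [← integral_const_mul, ← integral_const_mul]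
  refine integral_mono_of_nonneg (.of_forall fun u => ?_) (hint.const_mul _)
    (.of_forall fun u => ?_)
  · exact mul_nonneg (exp_pos _).le (indicator_nonneg (fun _ _ => (exp_pos _).le) u)
  · by_cases hu : u ∈ D
    · simp only [indicator_of_mem hu, ← exp_add]
      have := div_le_div_of_nonneg_left (sub_nonneg.2 (hm u hu)) hε hεε'
      rw [exp_le_exp, neg_div, neg_div]
      rw [sub_div, sub_div] at this
      linarith
    · simp [indicator_of_notMem hu]

lemma exp_mul_measureReal_le_integral_indicator_exp {ε : ℝ} (hε : 0 < ε) (c : ℝ)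
    (hint : Integrable (D.indicator fun u => exp (-a u / ε)) μ) :
    exp (-c / ε) * μ.real {u ∈ D | a u ≤ c}
      ≤ ∫ u, D.indicator (fun u => exp (-a u / ε)) u ∂μ := by
  rw [← setOf_exp_le_indicator_exp_neg_div hε]
  exact mul_meas_ge_le_integral_of_nonneg
    (.of_forall fun u => indicator_nonneg (fun _ _ => (exp_pos _).le) u) hint _

lemma measureReal_sublevel_pos {c : ℝ} (hc : μ {u ∈ D | a u ≤ c} ≠ 0) {ε : ℝ} (hε : 0 < ε)
    (hint : Integrable (D.indicator fun u => exp (-a u / ε)) μ) :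
    0 < μ.real {u ∈ D | a u ≤ c} := by
  refine ENNReal.toReal_pos hc ?_
  rw [← setOf_exp_le_indicator_exp_neg_div hε]
  exact (hint.measure_ge_lt_top (exp_pos _)).ne

lemma integral_indicator_exp_neg_div_pos (hsub : ∀ δ > 0, μ {u ∈ D | a u ≤ m + δ} ≠ 0)
    (hint : ∀ ε > 0, Integrable (D.indicator fun u => exp (-a u / ε)) μ) {ε : ℝ} (hε : 0 < ε) :
    0 < ∫ u, D.indicator (fun u => exp (-a u / ε)) u ∂μ :=
  (mul_pos (exp_pos _) (measureReal_sublevel_pos (hsub 1 one_pos) hε (hint ε hε))).trans_le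
    (exp_mul_measureReal_le_integral_indicator_exp hε _ (hint ε hε))

theorem tendsto_neg_mul_log_integral_indicator_exp_neg_div
    (hsub : ∀ δ > 0, μ {u ∈ D | a u ≤ m + δ} ≠ 0)
    (hint : ∀ ε > 0, Integrable (D.indicator fun u => exp (-a u / ε)) μ)
    (hm : ∀ u ∈ D, m ≤ a u) :
    Tendsto (fun ε => -ε * log (∫ u, D.indicator (fun u => exp (-a u / ε)) u ∂μ))
      (𝓝[>] 0) (𝓝 m) := by
  set Z := fun ε => ∫ u, D.indicator (fun u => exp (-a u / ε)) u ∂μ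
  have hZ : ∀ ε > 0, 0 < Z ε := fun ε hε => integral_indicator_exp_neg_div_pos hsub hint hε
  refine tendsto_nhdsGT_zero_of_sandwich (C := m + log (Z 1)) ?_
    fun δ hδ => ⟨log (μ.real {u ∈ D | a u ≤ m + δ}), ?_⟩
  · filter_upwards [Ioc_mem_nhdsGT one_pos] with ε ⟨hε, hε1⟩
    have h := log_le_log (mul_pos (exp_pos _) (hZ ε hε))
      (exp_div_mul_integral_indicator_exp_neg_div_le_of_le hm hε hε1 (hint 1 one_pos))
    rw [log_mul (exp_pos _).ne' (hZ ε hε).ne', log_mul (exp_pos _).ne' (hZ 1 one_pos).ne',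
      log_exp, log_exp, div_one] at h
    have := mul_le_mul_of_nonneg_left h hε.le
    rw [mul_add, mul_div_cancel₀ _ hε.ne'] at this
    linarith
  · filter_upwards [self_mem_nhdsWithin] with ε hε
    have hA := measureReal_sublevel_pos (hsub δ hδ) one_pos (hint 1 one_pos)
    have h := log_le_log (by positivity)
      (exp_mul_measureReal_le_integral_indicator_exp hε (m + δ) (hint ε hε))
    rw [log_mul (exp_pos _).ne' hA.ne', log_exp] at h
    have := mul_le_mul_of_nonneg_left h (le_of_lt hε)
    rw [mul_add, mul_div_cancel₀ _ (ne_of_gt hε)] at this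
    linarith

end Laplace

lemma exists_measure_sublevel_dist_le_ne_zero {E : Type*} [PseudoMetricSpace E]
    [MeasurableSpace E] (μ : Measure E) {D : Set E} (hD : μ D ≠ 0) (f : E → ℝ) (c : E) :
    ∃ k : ℕ, μ {w ∈ D | f w ≤ k ∧ dist w c ≤ k} ≠ 0 := by
  by_contra! h
  refine hD (measure_mono_null (fun w hw => ?_) (measure_iUnion_null_iff.2 h))
  obtain ⟨k, hk⟩ := exists_nat_ge (max (f w) (dist w c))
  exact mem_iUnion.2 ⟨k, hw, le_of_max_le_left hk, le_of_max_le_right hk⟩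

lemma ConvexOn.homothety_mem_and_le {E : Type*} [AddCommGroup E] [Module ℝ E] {D : Set E}
    {f : E → ℝ} (hf : ConvexOn ℝ D f) {u w : E} (hu : u ∈ D) (hw : w ∈ D) {r : ℝ}
    (hr0 : 0 ≤ r) (hr1 : r ≤ 1) :
    AffineMap.homothety u r w ∈ D ∧ f (AffineMap.homothety u r w) ≤ f u + r * (f w - f u) := by
  rw [AffineMap.homothety_eq_lineMap, AffineMap.lineMap_apply_module]
  refine ⟨hf.1 hu hw (sub_nonneg.2 hr1) hr0 (sub_add_cancel 1 r), ?_⟩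
  have := hf.2 hu hw (sub_nonneg.2 hr1) hr0 (sub_add_cancel 1 r)
  simp only [smul_eq_mul] at this
  linarith

theorem ConvexOn.measure_sublevel_add_ne_zero {E : Type*} [NormedAddCommGroup E]
    [NormedSpace ℝ E] [MeasurableSpace E] [BorelSpace E] [FiniteDimensional ℝ E]
    (μ : Measure E) [μ.IsAddHaarMeasure] {D : Set E} {f q : E → ℝ} (hf : ConvexOn ℝ D f)
    (hD : (interior D).Nonempty) {u : E} (hu : u ∈ D) (hq : ContinuousAt q u) {c : ℝ}
    (huc : f u + q u < c) :
    μ {v ∈ D | f v + q v < c} ≠ 0 := by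
  set η := c - (f u + q u)
  have hη : 0 < η := sub_pos.2 huc
  obtain ⟨k, hk⟩ := exists_measure_sublevel_dist_le_ne_zero μ
    (fun h => isOpen_interior.measure_ne_zero μ hD (measure_mono_null interior_subset h)) f u
  obtain ⟨ρ, hρ, hqρ⟩ := Metric.continuousAt_iff.1 hq (η / 2) (half_pos hη)
  have hsmall : ∀ᶠ r in 𝓝[>] (0 : ℝ), r < 1 ∧ r * k < ρ ∧ r * (k - f u) < η / 2 := by
    have hlin : ∀ c : ℝ, Tendsto (fun r : ℝ => r * c) (𝓝[>] 0) (𝓝 0) := fun c =>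
      ((continuous_id.mul continuous_const).tendsto' 0 0 (by simp)).mono_left nhdsWithin_le_nhds
    exact ((hlin 1).eventually_lt_const one_pos |>.mono fun r h => by simpa using h).and
      (((hlin _).eventually_lt_const hρ).and ((hlin _).eventually_lt_const (half_pos hη)))
  obtain ⟨r, ⟨hr1, hrρ, hrf⟩, hr0 : 0 < r⟩ := (hsmall.and self_mem_nhdsWithin).exists
  have himage : μ (AffineMap.homothety u r '' {w ∈ D | f w ≤ k ∧ dist w u ≤ k}) ≠ 0 := by
    rw [Measure.addHaar_image_homothety]
    exact mul_ne_zero (by simp [hr0.ne']) hk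
  refine fun h => himage (measure_mono_null ?_ h)
  rintro _ ⟨w, ⟨hwD, hwf, hwu⟩, rfl⟩
  obtain ⟨hmem, hle⟩ := hf.homothety_mem_and_le hu hwD hr0.le hr1.le
  have hdist : dist (AffineMap.homothety u r w) u < ρ := by
    rw [dist_homothety_center, dist_comm, Real.norm_of_nonneg hr0.le]
    nlinarith
  have hq' := abs_sub_lt_iff.1 (hqρ hdist)
  have hrw := mul_le_mul_of_nonneg_left (sub_le_sub_right hwf (f u)) hr0.le
  exact ⟨hmem, by linarith⟩

lemma convexOn_toReal_setOf_ne_top {E : Type*} [AddCommGroup E] [Module ℝ E] {J : E → EReal}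
    (hbot : ∀ u, J u ≠ ⊥)
    (hconv : ∀ u v : E, ∀ a b : ℝ, 0 ≤ a → 0 ≤ b → a + b = 1 →
      J (a • u + b • v) ≤ (a : EReal) * J u + (b : EReal) * J v) :
    ConvexOn ℝ {u | J u ≠ ⊤} fun u => (J u).toReal := by
  have hle : ∀ u, J u ≠ ⊤ → ∀ v, J v ≠ ⊤ → ∀ a b : ℝ, 0 ≤ a → 0 ≤ b → a + b = 1 →
      J (a • u + b • v) ≤ ((a * (J u).toReal + b * (J v).toReal : ℝ) : EReal) := by
    intro u hu v hv a b ha hb hab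
    simpa only [EReal.coe_add, EReal.coe_mul, EReal.coe_toReal hu (hbot u),
      EReal.coe_toReal hv (hbot v)] using hconv u v a b ha hb hab
  refine ⟨fun u hu v hv a b ha hb hab => ne_top_of_le_ne_top (EReal.coe_ne_top _)
    (hle u hu v hv a b ha hb hab), fun u hu v hv a b ha hb hab => ?_⟩
  have := EReal.toReal_le_toReal (hle u hu v hv a b ha hb hab) (hbot _) (EReal.coe_ne_top _)
  rwa [EReal.toReal_coe] at this

lemma EReal.exists_coe_eq_iInf_add_coe {ι : Type*} {J : ι → EReal} {g : ι → ℝ}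
    (hJ : ∀ i, 0 ≤ J i) (hg : ∀ i, 0 ≤ g i) (hdom : ∃ i, J i ≠ ⊤) :
    ∃ m : ℝ, (m : EReal) = ⨅ i, J i + g i ∧ (∀ i, J i ≠ ⊤ → m ≤ (J i).toReal + g i) ∧
      ∀ δ > 0, ∃ i, J i ≠ ⊤ ∧ (J i).toReal + g i < m + δ := by
  have hfin : ∀ i, J i ≠ ⊤ → J i + g i = (((J i).toReal + g i : ℝ) : EReal) := fun i hi => by
    rw [EReal.coe_add, EReal.coe_toReal hi (ne_bot_of_le_ne_bot EReal.zero_ne_bot (hJ i))]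
  set M := ⨅ i, J i + g i
  have hM0 : 0 ≤ M := le_iInf fun i => add_nonneg (hJ i) (EReal.coe_nonneg.2 (hg i))
  obtain ⟨i₀, hi₀⟩ := hdom
  have hMtop : M ≠ ⊤ := ne_top_of_le_ne_top (hfin i₀ hi₀ ▸ EReal.coe_ne_top _) (iInf_le _ i₀)
  have hM := EReal.coe_toReal hMtop (ne_bot_of_le_ne_bot EReal.zero_ne_bot hM0)
  refine ⟨M.toReal, hM, fun i hi => ?_, fun δ hδ => ?_⟩
  · have : M ≤ J i + g i := iInf_le _ i
    rw [← hM, hfin i hi] at this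
    exact EReal.coe_le_coe_iff.1 this
  · obtain ⟨i, hi⟩ := iInf_lt_iff.1 (show M < ((M.toReal + δ : ℝ) : EReal) by
      rw [← hM]; exact_mod_cast lt_add_of_pos_right _ hδ)
    have hiJ : J i ≠ ⊤ := fun h => by simp [h] at hi
    exact ⟨i, hiJ, EReal.coe_lt_coe_iff.1 (hfin i hiJ ▸ hi)⟩

theorem stmt8_general (n : ℕ) (t : ℝ) (ht : 0 < t) (J : EuclideanSpace ℝ (Fin n) → EReal)
    (hconv : ∀ u v : EuclideanSpace ℝ (Fin n), ∀ a b : ℝ, 0 ≤ a → 0 ≤ b → a + b = 1 →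
      J (a • u + b • v) ≤ (a : EReal) * J u + (b : EReal) * J v)
    (hint : (interior {u : EuclideanSpace ℝ (Fin n) | J u ≠ ⊤}).Nonempty)
    (hinf : (⨅ u, J u) = 0)
    (x : EuclideanSpace ℝ (Fin n))
    (φ : ℝ → EuclideanSpace ℝ (Fin n) → ℝ)
    (hφ : ∀ ε : ℝ, 0 < ε → ∀ u, φ ε u =
      if J u = ⊤ then 0
      else Real.exp (-((J u).toReal + (1 / (2 * t)) * ‖x - u‖ ^ 2) / ε))
    (hZfin : ∀ ε : ℝ, 0 < ε → Integrable (φ ε)) :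
    Filter.Tendsto
      (fun ε : ℝ =>
        ((-ε * Real.log ((2 * Real.pi * t * ε) ^ (-(n : ℝ) / 2) * ∫ u, φ ε u) : ℝ) : EReal))
      (nhdsWithin 0 (Set.Ioi 0))
      (nhds (⨅ u : EuclideanSpace ℝ (Fin n),
        (J u + (((1 / (2 * t)) * ‖x - u‖ ^ 2 : ℝ) : EReal)))) := by
  set D := {u : EuclideanSpace ℝ (Fin n) | J u ≠ ⊤}
  set q := fun u : EuclideanSpace ℝ (Fin n) => 1 / (2 * t) * ‖x - u‖ ^ 2
  have hJ0 : ∀ u, 0 ≤ J u := fun u => hinf ▸ iInf_le J u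
  obtain ⟨m, hmM, hm, hnear⟩ := EReal.exists_coe_eq_iInf_add_coe hJ0
    (g := q) (fun u => by positivity) (hint.mono interior_subset)
  have hφD : ∀ ε > 0, φ ε = D.indicator fun u => exp (-((J u).toReal + q u) / ε) :=
    fun ε hε => funext fun u => by by_cases hu : J u = ⊤ <;> simp [hφ ε hε, D, q, hu]
  have hfconv := convexOn_toReal_setOf_ne_top
    (fun u => ne_bot_of_le_ne_bot EReal.zero_ne_bot (hJ0 u)) hconv
  have hsub : ∀ δ > 0, volume {u ∈ D | (J u).toReal + q u ≤ m + δ} ≠ 0 := fun δ hδ h => by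
    obtain ⟨u, hu, hau⟩ := hnear δ hδ
    refine hfconv.measure_sublevel_add_ne_zero volume hint hu (by fun_prop) hau
      (measure_mono_null ?_ h)
    exact fun v hv => ⟨hv.1, hv.2.le⟩
  have hintD : ∀ ε > 0, Integrable (D.indicator fun u => exp (-((J u).toReal + q u) / ε)) :=
    fun ε hε => hφD ε hε ▸ hZfin ε hε
  have hlap := tendsto_neg_mul_log_integral_indicator_exp_neg_div hsub hintD hm
  have hprefactor := ((tendsto_mul_log_const_mul_nhds_zero (2 * π * t)).mono_left
    (nhdsWithin_le_nhds (s := Ioi 0))).const_mul ((n : ℝ) / 2)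
  rw [mul_zero] at hprefactor
  rw [show (⨅ u, J u + ((1 / (2 * t) * ‖x - u‖ ^ 2 : ℝ) : EReal)) = m from hmM.symm,
    EReal.tendsto_coe]
  refine (zero_add m ▸ hprefactor.add hlap).congr' ?_
  filter_upwards [self_mem_nhdsWithin] with ε (hε : 0 < ε)
  rw [hφD ε hε, log_mul (by positivity)
    (integral_indicator_exp_neg_div_pos hsub hintD hε).ne', log_rpow (by positivity)]
  ring

/-- Vanishing viscosity (Laplace principle) limit: with
`S_ε(x,t) = -ε ln((2πtε)^{-n/2} ∫ e^{-(J(u)+‖x-u‖²/(2t))/ε} du)` and `J ∈ Γ₀(ℝⁿ)`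
bounded below with `inf J = 0` and `int(dom J) ≠ ∅`, one has
`S_ε(x,t) → inf_u {J(u) + (1/(2t))‖x-u‖²}` as `ε → 0⁺` (with `e^{-∞} = 0`). -/
theorem stmt8 (n : ℕ) (t : ℝ) (ht : 0 < t) (J : EuclideanSpace ℝ (Fin n) → EReal)
    (hproper : ∃ u, J u ≠ ⊤)
    (hnobot : ∀ u, J u ≠ ⊥)
    (hconv : ∀ u v : EuclideanSpace ℝ (Fin n), ∀ a b : ℝ, 0 ≤ a → 0 ≤ b → a + b = 1 →
      J (a • u + b • v) ≤ (a : EReal) * J u + (b : EReal) * J v)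
    (hlsc : LowerSemicontinuous J)
    (hint : (interior {u : EuclideanSpace ℝ (Fin n) | J u ≠ ⊤}).Nonempty)
    (hinf : (⨅ u, J u) = 0)
    (x : EuclideanSpace ℝ (Fin n))
    (φ : ℝ → EuclideanSpace ℝ (Fin n) → ℝ)
    (hφ : ∀ ε : ℝ, 0 < ε → ∀ u, φ ε u =
      if J u = ⊤ then 0
      else Real.exp (-((J u).toReal + (1 / (2 * t)) * ‖x - u‖ ^ 2) / ε))
    (hZfin : ∀ ε : ℝ, 0 < ε → Integrable (φ ε))
    (hZpos : ∀ ε : ℝ, 0 < ε → 0 < ∫ u, φ ε u) :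
    Filter.Tendsto
      (fun ε : ℝ =>
        ((-ε * Real.log ((2 * Real.pi * t * ε) ^ (-(n : ℝ) / 2) * ∫ u, φ ε u) : ℝ) : EReal))
      (nhdsWithin 0 (Set.Ioi 0))
      (nhds (⨅ u : EuclideanSpace ℝ (Fin n),
        (J u + (((1 / (2 * t)) * ‖x - u‖ ^ 2 : ℝ) : EReal)))) :=
  stmt8_general n t ht J hconv hint hinf x φ hφ hZfin
end

section
/- Let J_1,...,J_m : ℝ^n → ℝ be measurable, t > 0, ε > 0, and suppose each integral Z_i(x) = ∫_{ℝ^n} exp(−(J_i(u) + (1/(2t))‖x−u‖²)/ε) du is finite and positive. Define S_{i,ε}(x,t) = −ε ln((2πtε)^{−n/2} Z_i(x)) and let J(x) = −ε ln(∑_{i=1}^m e^{−J_i(x)/ε}). Then −ε ln((2πtε)^{−n/2} ∫_{ℝ^n} exp(−(J(u) + (1/(2t))‖x−u‖²)/ε) du) = −ε ln(∑_{i=1}^m e^{−S_{i,ε}(x,t)/ε}). -/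
open MeasureTheory
open scoped BigOperators

/-!
Writing `J = -ε log ∑ᵢ exp (-Jᵢ / ε)`, the Cole–Hopf weight `exp (-(J u + ‖x - u‖² / (2t)) / ε)`
is the sum of the weights of the `Jᵢ`, so by linearity of the integral `Z = ∑ᵢ Zᵢ`.
Undoing the transform on both sides then gives the identity.
-/

namespace Real

lemma exp_neg_div_neg_mul_log {ε y : ℝ} (hε : ε ≠ 0) (hy : 0 < y) :
    exp (-(-ε * log y) / ε) = y := by
  rw [show -(-ε * log y) / ε = log y by field_simp, exp_log hy]

lemma exp_neg_softmin_add_div {ι : Type*} [Fintype ι] [Nonempty ι] (a : ι → ℝ) (c : ℝ)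
    {ε : ℝ} (hε : ε ≠ 0) :
    exp (-((-ε * log (∑ i, exp (-a i / ε))) + c) / ε) = ∑ i, exp (-(a i + c) / ε) := by
  have hsum : 0 < ∑ i, exp (-a i / ε) := Finset.sum_pos (fun i _ => exp_pos _) Finset.univ_nonempty
  rw [show -((-ε * log (∑ i, exp (-a i / ε))) + c) / ε
      = -(-ε * log (∑ i, exp (-a i / ε))) / ε + -c / ε by ring,
    exp_add, exp_neg_div_neg_mul_log hε hsum, Finset.sum_mul]
  refine Finset.sum_congr rfl fun i _ => ?_
  rw [← exp_add]
  ring_nf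

end Real

lemma integral_exp_neg_softmin_add_div {α ι : Type*} [MeasurableSpace α] (μ : Measure α)
    [Fintype ι] [Nonempty ι] (a : ι → α → ℝ) (c : α → ℝ) {ε : ℝ} (hε : ε ≠ 0)
    (hint : ∀ i, Integrable (fun u => Real.exp (-(a i u + c u) / ε)) μ) :
    ∫ u, Real.exp (-((-ε * Real.log (∑ i, Real.exp (-a i u / ε))) + c u) / ε) ∂μ
      = ∑ i, ∫ u, Real.exp (-(a i u + c u) / ε) ∂μ := by
  rw [← integral_finsetSum _ fun i _ => hint i]
  simp only [Real.exp_neg_softmin_add_div _ _ hε]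

theorem stmt9_general (n m : ℕ) (hm : 0 < m)
    (J : Fin m → EuclideanSpace ℝ (Fin n) → ℝ)
    (t ε : ℝ) (ht : 0 < t) (hε : 0 < ε)
    (x : EuclideanSpace ℝ (Fin n))
    (hint : ∀ i, Integrable
      (fun u => Real.exp (-(J i u + (1 / (2 * t)) * ‖x - u‖ ^ 2) / ε)))
    (hpos : ∀ i, 0 < ∫ u, Real.exp (-(J i u + (1 / (2 * t)) * ‖x - u‖ ^ 2) / ε)) :
    -ε * Real.log ((2 * Real.pi * t * ε) ^ (-(n : ℝ) / 2) *
        ∫ u, Real.exp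
          (-((-ε * Real.log (∑ i : Fin m, Real.exp (-(J i u) / ε)))
              + (1 / (2 * t)) * ‖x - u‖ ^ 2) / ε))
      = -ε * Real.log (∑ i : Fin m, Real.exp
          (-(-ε * Real.log ((2 * Real.pi * t * ε) ^ (-(n : ℝ) / 2) *
              ∫ u, Real.exp (-(J i u + (1 / (2 * t)) * ‖x - u‖ ^ 2) / ε))) / ε)) := by
  have : Nonempty (Fin m) := Fin.pos_iff_nonempty.mp hm
  have hC : 0 < (2 * Real.pi * t * ε) ^ (-(n : ℝ) / 2) := by positivity
  rw [integral_exp_neg_softmin_add_div volume J _ hε.ne' hint, Finset.mul_sum,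
    Finset.sum_congr rfl fun i _ => Real.exp_neg_div_neg_mul_log hε.ne' (mul_pos hC (hpos i))]

/-- Min-plus analogue for viscous HJ PDEs: the Cole–Hopf transformed solution with
soft-min initial data `J = -ε ln(∑ e^{-J_i/ε})` equals the soft-min of the individual
transformed solutions `S_{i,ε}`. -/
theorem stmt9 (n m : ℕ) (hm : 0 < m)
    (J : Fin m → EuclideanSpace ℝ (Fin n) → ℝ)
    (hJmeas : ∀ i, Measurable (J i))
    (t ε : ℝ) (ht : 0 < t) (hε : 0 < ε)
    (x : EuclideanSpace ℝ (Fin n))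
    (hint : ∀ i, Integrable
      (fun u => Real.exp (-(J i u + (1 / (2 * t)) * ‖x - u‖ ^ 2) / ε)))
    (hpos : ∀ i, 0 < ∫ u, Real.exp (-(J i u + (1 / (2 * t)) * ‖x - u‖ ^ 2) / ε)) :
    -ε * Real.log ((2 * Real.pi * t * ε) ^ (-(n : ℝ) / 2) *
        ∫ u, Real.exp
          (-((-ε * Real.log (∑ i : Fin m, Real.exp (-(J i u) / ε)))
              + (1 / (2 * t)) * ‖x - u‖ ^ 2) / ε))
      = -ε * Real.log (∑ i : Fin m, Real.exp
          (-(-ε * Real.log ((2 * Real.pi * t * ε) ^ (-(n : ℝ) / 2) *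
              ∫ u, Real.exp (-(J i u + (1 / (2 * t)) * ‖x - u‖ ^ 2) / ε))) / ε)) :=
  stmt9_general n m hm J t ε ht hε x hint hpos
end

section
/- Let σ_1,...,σ_m > 0, μ_1,...,μ_m ∈ ℝ^n, t > 0, ε > 0, and define S_ε(x,t) = −ε ln(∑_{i=1}^m (σ_i²/(σ_i²+t))^{n/2} exp(−‖x−μ_i‖²/(2(σ_i²+t)ε))). Then S_ε is differentiable in x and x − t ∇_x S_ε(x,t) = [∑_{i=1}^m ((σ_i² x + t μ_i)/(σ_i²+t)) w_i(x)] / [∑_{i=1}^m w_i(x)], where w_i(x) = (σ_i²/(σ_i²+t))^{n/2} exp(−‖x−μ_i‖²/(2(σ_i²+t)ε)). -/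
/-!
Write `wᵢ(x) = cᵢ exp(-‖x - μᵢ‖² / (2 aᵢ ε))` with `aᵢ = σᵢ² + t`. The gradient of
`-ε log ∑ᵢ wᵢ` is the `w`-weighted average of `-ε ∇ log wᵢ = (x - μᵢ) / aᵢ`, and since
`x - t (x - μᵢ) / aᵢ = (σᵢ² x + t μᵢ) / aᵢ`, the same average of these terms is `x - t ∇S_ε`.
-/

open Real InnerProductSpace

section Gradient

variable {E : Type*} [NormedAddCommGroup E] [InnerProductSpace ℝ E] [CompleteSpace E] {x : E}

theorem HasGradientAt.const_mul {f : E → ℝ} {g : E} (c : ℝ) (hf : HasGradientAt f g x) :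
    HasGradientAt (fun y => c * f y) (c • g) x := by
  rw [hasGradientAt_iff_hasFDerivAt, map_smul]
  exact hf.hasFDerivAt.const_mul c

theorem hasGradientAt_neg_norm_sub_sq_div (μ : E) (a ε : ℝ) :
    HasGradientAt (fun y => -‖y - μ‖ ^ 2 / (2 * a * ε)) (-(a * ε)⁻¹ • (x - μ)) x := by
  rw [hasGradientAt_iff_hasFDerivAt]
  simp only [div_eq_mul_inv]
  refine ((hasFDerivAt_id x).sub_const μ).norm_sq.neg.mul_const (2 * a * ε)⁻¹ |>.congr_fderiv ?_
  ext v
  simp only [id_eq, ContinuousLinearMap.comp_id, neg_apply, smul_apply, coe_innerSL_apply,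
    nsmul_eq_mul, smul_eq_mul, map_smul, toDual_apply_apply]
  ring

theorem HasGradientAt.log_sum_mul_exp {ι : Type*} [Fintype ι] {f : ι → E → ℝ} {g : ι → E}
    (c : ι → ℝ) (hf : ∀ i, HasGradientAt (f i) (g i) x)
    (hW : ∑ i, c i * exp (f i x) ≠ 0) :
    HasGradientAt (fun y => log (∑ i, c i * exp (f i y)))
      ((∑ i, c i * exp (f i x))⁻¹ • ∑ i, (c i * exp (f i x)) • g i) x := by
  simp only [hasGradientAt_iff_hasFDerivAt] at hf ⊢
  refine (HasFDerivAt.fun_sum fun i _ => (hf i).exp.const_mul (c i)).log hW |>.congr_fderiv ?_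
  ext v
  simp only [smul_apply, sum_apply, toDual_apply_apply, smul_eq_mul, Finset.mul_sum, map_smul,
    map_sum, mul_assoc]

variable {ι : Type*} [Fintype ι]

theorem hasGradientAt_neg_mul_log_sum_gaussian (c a : ι → ℝ) (μ : ι → E) {ε : ℝ} (hε : ε ≠ 0)
    (hW : ∑ i, c i * exp (-‖x - μ i‖ ^ 2 / (2 * a i * ε)) ≠ 0) :
    HasGradientAt (fun y => -ε * log (∑ i, c i * exp (-‖y - μ i‖ ^ 2 / (2 * a i * ε))))
      ((∑ i, c i * exp (-‖x - μ i‖ ^ 2 / (2 * a i * ε)))⁻¹ •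
        ∑ i, (c i * exp (-‖x - μ i‖ ^ 2 / (2 * a i * ε)) / a i) • (x - μ i)) x := by
  convert (HasGradientAt.log_sum_mul_exp c
    (fun i => hasGradientAt_neg_norm_sub_sq_div (μ i) (a i) ε) hW).const_mul (-ε) using 1
  rw [smul_comm (-ε)]
  congr 1
  rw [Finset.smul_sum]
  refine Finset.sum_congr rfl fun i _ => ?_
  rw [smul_smul, smul_smul, mul_inv]
  congr 1
  field_simp

end Gradient

theorem sub_smul_score_eq_posterior_mean {𝕜 V ι : Type*} [Field 𝕜] [AddCommGroup V] [Module 𝕜 V]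
    [Fintype ι] (s w : ι → 𝕜) (t : 𝕜) (μ : ι → V) (x : V) (hs : ∀ i, s i + t ≠ 0)
    (hw : ∑ i, w i ≠ 0) :
    x - t • ((∑ i, w i)⁻¹ • ∑ i, (w i / (s i + t)) • (x - μ i))
      = (∑ i, w i)⁻¹ • ∑ i, w i • ((s i + t)⁻¹ • (s i • x + t • μ i)) := by
  rw [eq_inv_smul_iff₀ hw, smul_sub, smul_comm _ t, smul_inv_smul₀ hw, Finset.sum_smul,
    Finset.smul_sum, ← Finset.sum_sub_distrib]
  refine Finset.sum_congr rfl fun i _ => ?_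
  have := hs i
  match_scalars
  · field_simp
    ring
  · field_simp

/-- Explicit posterior mean for a Gaussian mixture prior:
`S_ε(x) = -ε ln(∑ i (σ_i²/(σ_i²+t))^{n/2} e^{-‖x-μ_i‖²/(2(σ_i²+t)ε)})` is differentiable
and `x - t ∇S_ε(x)` equals the softmax-weighted average of `(σ_i² x + t μ_i)/(σ_i²+t)`. -/
theorem stmt12 (n m : ℕ) (hm : 0 < m) (σ : Fin m → ℝ) (hσ : ∀ i, 0 < σ i)
    (μ : Fin m → EuclideanSpace ℝ (Fin n)) (t ε : ℝ) (ht : 0 < t) (hε : 0 < ε)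
    (S : EuclideanSpace ℝ (Fin n) → ℝ)
    (hS : ∀ x, S x = -ε * Real.log (∑ i : Fin m,
      ((σ i) ^ 2 / ((σ i) ^ 2 + t)) ^ ((n : ℝ) / 2) *
        Real.exp (-‖x - μ i‖ ^ 2 / (2 * ((σ i) ^ 2 + t) * ε)))) :
    Differentiable ℝ S ∧
    ∀ x : EuclideanSpace ℝ (Fin n),
      x - t • gradient S x
        = (∑ i : Fin m, ((σ i) ^ 2 / ((σ i) ^ 2 + t)) ^ ((n : ℝ) / 2) *
              Real.exp (-‖x - μ i‖ ^ 2 / (2 * ((σ i) ^ 2 + t) * ε)))⁻¹ •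
            ∑ i : Fin m,
              (((σ i) ^ 2 / ((σ i) ^ 2 + t)) ^ ((n : ℝ) / 2) *
                  Real.exp (-‖x - μ i‖ ^ 2 / (2 * ((σ i) ^ 2 + t) * ε))) •
                (((σ i) ^ 2 + t)⁻¹ • ((σ i) ^ 2 • x + t • μ i)) := by
  have hvar : ∀ i, 0 < σ i ^ 2 + t := fun i => by positivity
  have : Nonempty (Fin m) := ⟨⟨0, hm⟩⟩
  have hW : ∀ x : EuclideanSpace ℝ (Fin n), 0 < ∑ i, (σ i ^ 2 / (σ i ^ 2 + t)) ^ ((n : ℝ) / 2) *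
      exp (-‖x - μ i‖ ^ 2 / (2 * (σ i ^ 2 + t) * ε)) := fun x =>
    Finset.sum_pos (fun i _ => mul_pos (rpow_pos_of_pos (div_pos (pow_pos (hσ i) 2) (hvar i)) _)
      (exp_pos _)) Finset.univ_nonempty
  have hgrad : ∀ x, HasGradientAt S _ x := fun x => by
    rw [funext hS]
    exact hasGradientAt_neg_mul_log_sum_gaussian _ _ μ hε.ne' (hW x).ne'
  refine ⟨fun x => (hgrad x).differentiableAt, fun x => ?_⟩
  rw [(hgrad x).gradient]
  exact sub_smul_score_eq_posterior_mean _ _ t μ x (fun i => (hvar i).ne') (hW x).ne'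
end
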